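/- Let (X,d) be a complete b-metric space with constant b ≥ 1. Then (H(X), H) is a complete b-metric space: every sequence (A_n) in H(X) that is Cauchy with respect to the Pompeiu–Hausdorff distance H converges in H to some A ∈ H(X). -/

import Mathlib

open Filter Topology Set

/-- A b-metric on `X` with constant `b ≥ 1`. -/
def IsBMetric {X : Type*} (b : ℝ) (d : X → X → ℝ) : Prop :=
  (∀ x y, 0 ≤ d x y) ∧ (∀ x y, d x y = 0 ↔ x = y) ∧
  (∀ x y, d x y = d y x) ∧ (∀ x y z, d x y ≤ b * (d x z + d z y))

/-- Convergence of a sequence with respect to a b-metric `d`. -/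
def BConverges {X : Type*} (d : X → X → ℝ) (x : ℕ → X) (l : X) : Prop :=
  Tendsto (fun n => d (x n) l) atTop (𝓝 0)

/-- Cauchyness of a sequence with respect to a b-metric `d`. -/
def BCauchy {X : Type*} (d : X → X → ℝ) (x : ℕ → X) : Prop :=
  ∀ ε : ℝ, 0 < ε → ∃ N : ℕ, ∀ m ≥ N, ∀ n ≥ N, d (x m) (x n) < ε

/-- Completeness of a b-metric space. -/
def BComplete {X : Type*} (d : X → X → ℝ) : Prop :=
  ∀ x : ℕ → X, BCauchy d x → ∃ l, BConverges d x l

/-- Sequential compactness of a subset of a b-metric space. -/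
def BSeqCompact {X : Type*} (d : X → X → ℝ) (A : Set X) : Prop :=
  ∀ x : ℕ → X, (∀ n, x n ∈ A) →
    ∃ a ∈ A, ∃ φ : ℕ → ℕ, StrictMono φ ∧ BConverges d (x ∘ φ) a

/-- `HX d` is the collection of nonempty compact subsets of `X`. -/
def HX {X : Type*} (d : X → X → ℝ) : Set (Set X) :=
  {A | A.Nonempty ∧ BSeqCompact d A}

/-- Distance from a point to a set: `d(x,B) = inf_{y ∈ B} d(x,y)`. -/
noncomputable def distPtSet {X : Type*} (d : X → X → ℝ) (x : X) (B : Set X) : ℝ :=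
  sInf (d x '' B)

/-- The Pompeiu–Hausdorff distance induced by `d`. -/
noncomputable def hausD {X : Type*} (d : X → X → ℝ) (A B : Set X) : ℝ :=
  max (sSup ((fun a => distPtSet d a B) '' A))
    (sSup ((fun y => distPtSet d y A) '' B))

/-- The class `𝓕` of Wardowski functions: continuous and strictly increasing on `(0,∞)`,
satisfying (F2) and (F3). -/
def MemF (F : ℝ → ℝ) : Prop :=
  ContinuousOn F (Ioi 0) ∧ StrictMonoOn F (Ioi 0) ∧
  (∀ α : ℕ → ℝ, (∀ n, 0 < α n) →
    (Tendsto α atTop (𝓝 0) ↔ Tendsto (fun n => F (α n)) atTop atBot)) ∧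
  (∃ h ∈ Ioo (0:ℝ) 1, Tendsto (fun t : ℝ => t ^ h * F t) (𝓝[>] 0) (𝓝 0))

/-- The class `Υ`: positive on `(0,∞)` with `liminf_{t → s} τ(t) > 0` for every `s ≥ 0`,
the limit being taken within the domain `(0,∞)`. -/
def MemUpsilon (τ : ℝ → ℝ) : Prop :=
  (∀ t : ℝ, 0 < t → 0 < τ t) ∧
  (∀ s : ℝ, 0 ≤ s → 0 < liminf τ (𝓝[Set.Ioi (0:ℝ)] s))

/-- A generalized F-contraction on a b-metric space. -/
def GenFContraction {X : Type*} (d : X → X → ℝ) (f : X → X) (F τ : ℝ → ℝ) : Prop :=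
  ∀ x y, 0 < d (f x) (f y) → τ (d x y) + F (d (f x) (f y)) ≤ F (d x y)

section Aux
variable {X : Type*} {b : ℝ} {d : X → X → ℝ}

lemma tendsto_zero_of_forall {f : ℕ → ℝ} (h0 : ∀ n, 0 ≤ f n)
    (h : ∀ ε : ℝ, 0 < ε → ∃ N, ∀ n ≥ N, f n < ε) : Tendsto f atTop (𝓝 0) := by
  rw [Metric.tendsto_atTop]
  intro ε hε
  obtain ⟨N, hN⟩ := h ε hε
  exact ⟨N, fun n hn => by
    rw [Real.dist_eq, sub_zero, abs_of_nonneg (h0 n)]; exact hN n hn⟩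

lemma exists_seq_machine {σ : Type*} (S : ℕ → Set σ) (R : ℕ → σ → σ → Prop)
    (h0 : (S 0).Nonempty) (hstep : ∀ n x, x ∈ S n → ∃ y ∈ S (n+1), R n x y) :
    ∃ f : ℕ → σ, (∀ n, f n ∈ S n) ∧ ∀ n, R n (f n) (f (n+1)) := by
  classical
  let g : ∀ n : ℕ, {x // x ∈ S n} := fun n => Nat.rec ⟨h0.choose, h0.choose_spec⟩
    (fun n p => ⟨(hstep n p.1 p.2).choose, (hstep n p.1 p.2).choose_spec.1⟩) n
  exact ⟨fun n => (g n).1, fun n => (g n).2,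
    fun n => (hstep n (g n).1 (g n).2).choose_spec.2⟩

private noncomputable def chainList {Y : Type*} (G : List Y → Y) : ℕ → List Y
  | 0 => []
  | (n+1) => chainList G n ++ [G (chainList G n)]

private noncomputable def chainFun {Y : Type*} (G : List Y → Y) (n : ℕ) : Y :=
  G (chainList G n)

private lemma chainFun_mem_chainList {Y : Type*} (G : List Y → Y) {m n : ℕ} (h : m < n) :
    chainFun G m ∈ chainList G n := by
  induction n with
  | zero => omega
  | succ n ih =>
    rw [chainList]
    rcases Nat.lt_succ_iff_lt_or_eq.1 h with h | h
    · exact List.mem_append_left _ (ih h)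
    · subst h; exact List.mem_append_right _ (List.mem_singleton.2 rfl)

lemma distPtSet_nonneg (hd : IsBMetric b d) (x : X) (B : Set X) : 0 ≤ distPtSet d x B :=
  Real.sInf_nonneg (by rintro r ⟨y, _, rfl⟩; exact hd.1 x y)

lemma distPtSet_le (hd : IsBMetric b d) (x : X) {y : X} {B : Set X} (hy : y ∈ B) :
    distPtSet d x B ≤ d x y :=
  csInf_le ⟨0, by rintro r ⟨z, _, rfl⟩; exact hd.1 x z⟩ ⟨y, hy, rfl⟩

lemma exists_lt_of_distPtSet_lt {B : Set X} {x : X} (hB : B.Nonempty) {c : ℝ}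
    (h : distPtSet d x B < c) : ∃ y ∈ B, d x y < c := by
  by_contra hcon
  push_neg at hcon
  have : c ≤ distPtSet d x B :=
    le_csInf (hB.image _) (by rintro r ⟨y, hy, rfl⟩; exact hcon y hy)
  linarith

lemma bounded_of_seqCompact (hb : 1 ≤ b) (hd : IsBMetric b d) {A : Set X}
    (hA : BSeqCompact d A) (hne : A.Nonempty) :
    ∃ x0 ∈ A, ∃ C : ℝ, ∀ y ∈ A, d x0 y ≤ C := by
  obtain ⟨x0, hx0⟩ := hne
  refine ⟨x0, hx0, ?_⟩
  by_contra h
  push_neg at h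
  choose y hyA hy using fun n : ℕ => h n
  obtain ⟨c, _, φ, hφ, hconv⟩ := hA y hyA
  rw [BConverges, Metric.tendsto_atTop] at hconv
  obtain ⟨I, hI⟩ := hconv 1 one_pos
  obtain ⟨i0, hi0⟩ := exists_nat_gt (b * (d x0 c + 1))
  set i := max i0 I with hi
  have h1 : d (y (φ i)) c < 1 := by
    have := hI i (le_max_right _ _)
    rw [Real.dist_eq, sub_zero] at this
    simpa [Function.comp, abs_of_nonneg (hd.1 _ _)] using this
  have h2 : (i : ℝ) < d x0 (y (φ i)) := by
    have := hy (φ i)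
    have hle : (i : ℝ) ≤ (φ i : ℝ) := Nat.cast_le.2 (hφ.le_apply)
    linarith
  have h3 : d x0 (y (φ i)) ≤ b * (d x0 c + d c (y (φ i))) := hd.2.2.2 _ _ _
  have h4 : d c (y (φ i)) = d (y (φ i)) c := hd.2.2.1 _ _
  have h5 : (i0 : ℝ) ≤ (i : ℝ) := Nat.cast_le.2 (le_max_left _ _)
  have hb0 : (0:ℝ) < b := lt_of_lt_of_le one_pos hb
  nlinarith
end Aux

section Aux2
variable {X : Type*} {b : ℝ} {d : X → X → ℝ}

lemma bddAbove_distImage (hb : 1 ≤ b) (hd : IsBMetric b d) {A B : Set X}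
    (hA : BSeqCompact d A) (hAne : A.Nonempty) (hBne : B.Nonempty) :
    BddAbove ((fun a => distPtSet d a B) '' A) := by
  obtain ⟨x0, hx0, C, hC⟩ := bounded_of_seqCompact hb hd hA hAne
  obtain ⟨y0, hy0⟩ := hBne
  refine ⟨b * (C + d x0 y0), ?_⟩
  rintro r ⟨a, ha, rfl⟩
  have h1 : distPtSet d a B ≤ d a y0 := distPtSet_le hd a hy0
  have h2 : d a y0 ≤ b * (d a x0 + d x0 y0) := hd.2.2.2 a y0 x0
  have h3 : d a x0 ≤ C := (hd.2.2.1 a x0) ▸ hC a ha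
  have hb0 : (0:ℝ) < b := lt_of_lt_of_le one_pos hb
  nlinarith [hd.1 a x0, hd.1 x0 y0]

lemma distPtSet_le_hausD (hb : 1 ≤ b) (hd : IsBMetric b d) {A B : Set X}
    (hA : BSeqCompact d A) (hAne : A.Nonempty) (hBne : B.Nonempty)
    {a : X} (ha : a ∈ A) : distPtSet d a B ≤ hausD d A B :=
  le_trans (le_csSup (bddAbove_distImage hb hd hA hAne hBne) ⟨a, ha, rfl⟩)
    (le_max_left _ _)

lemma distPtSet_le_hausD' (hb : 1 ≤ b) (hd : IsBMetric b d) {A B : Set X}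
    (hB : BSeqCompact d B) (hAne : A.Nonempty) (hBne : B.Nonempty)
    {y : X} (hy : y ∈ B) : distPtSet d y A ≤ hausD d A B :=
  le_trans (le_csSup (bddAbove_distImage hb hd hB hBne hAne) ⟨y, hy, rfl⟩)
    (le_max_right _ _)

lemma hausD_le {A B : Set X} (hAne : A.Nonempty) (hBne : B.Nonempty) {c : ℝ}
    (h1 : ∀ a ∈ A, distPtSet d a B ≤ c) (h2 : ∀ y ∈ B, distPtSet d y A ≤ c) :
    hausD d A B ≤ c :=
  max_le (csSup_le (hAne.image _) (by rintro r ⟨a, ha, rfl⟩; exact h1 a ha))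
    (csSup_le (hBne.image _) (by rintro r ⟨y, hy, rfl⟩; exact h2 y hy))

lemma hausD_nonneg (hd : IsBMetric b d) (A B : Set X) : 0 ≤ hausD d A B :=
  le_trans (Real.sSup_nonneg (by rintro r ⟨a, _, rfl⟩; exact distPtSet_nonneg hd _ _))
    (le_max_left _ _)

lemma distPtSet_le_b_mul (hb : 1 ≤ b) (hd : IsBMetric b d) {B : Set X}
    (hBne : B.Nonempty) (x y : X) :
    distPtSet d x B ≤ b * (d x y + distPtSet d y B) := by
  have hb0 : (0:ℝ) < b := lt_of_lt_of_le one_pos hb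
  refine le_of_forall_pos_le_add fun ε hε => ?_
  obtain ⟨z, hz, hdz⟩ := exists_lt_of_distPtSet_lt hBne
    (show distPtSet d y B < distPtSet d y B + ε / b by linarith [div_pos hε hb0])
  have h1 : distPtSet d x B ≤ d x z := distPtSet_le hd x hz
  have h2 : d x z ≤ b * (d x y + d y z) := hd.2.2.2 x z y
  have h3 : b * d y z < b * distPtSet d y B + ε := by
    have := mul_lt_mul_of_pos_left hdz hb0
    rw [mul_add] at this
    rw [mul_div_cancel₀] at this
    · linarith
    · exact ne_of_gt hb0
  nlinarith

lemma distPtSet_le_of_hausD (hb : 1 ≤ b) (hd : IsBMetric b d) {A B : Set X}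
    (hA : BSeqCompact d A) (hAne : A.Nonempty) (hBne : B.Nonempty) (x : X) :
    distPtSet d x B ≤ b * (distPtSet d x A + hausD d A B) := by
  have hb0 : (0:ℝ) < b := lt_of_lt_of_le one_pos hb
  refine le_of_forall_pos_le_add fun ε hε => ?_
  obtain ⟨y, hy, hdy⟩ := exists_lt_of_distPtSet_lt hAne
    (show distPtSet d x A < distPtSet d x A + ε / b by linarith [div_pos hε hb0])
  have h1 : distPtSet d x B ≤ b * (d x y + distPtSet d y B) :=
    distPtSet_le_b_mul hb hd hBne x y
  have h2 : distPtSet d y B ≤ hausD d A B := distPtSet_le_hausD hb hd hA hAne hBne hy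
  have h3 : b * d x y < b * distPtSet d x A + ε := by
    have := mul_lt_mul_of_pos_left hdy hb0
    rw [mul_add, mul_div_cancel₀ _ (ne_of_gt hb0)] at this
    linarith
  nlinarith

lemma exists_finite_net (hb : 1 ≤ b) (hd : IsBMetric b d) {A : Set X}
    (hA : BSeqCompact d A) {ε : ℝ} (hε : 0 < ε) :
    ∃ T : Finset X, ∀ a ∈ A, ∃ p ∈ T, d a p < ε := by
  classical
  have hb0 : (0:ℝ) < b := lt_of_lt_of_le one_pos hb
  by_contra hcon
  push_neg at hcon
  have H : ∀ l : List X, ∃ a ∈ A, ∀ p ∈ l, ε ≤ d a p := by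
    intro l
    obtain ⟨a, ha, h⟩ := hcon l.toFinset
    exact ⟨a, ha, fun p hp => h p (List.mem_toFinset.2 hp)⟩
  set G : List X → X := fun l => (H l).choose with hG
  set f : ℕ → X := chainFun G with hf
  have hmem : ∀ n, f n ∈ A := fun n => (H (chainList G n)).choose_spec.1
  have hsep : ∀ m n : ℕ, m < n → ε ≤ d (f n) (f m) := fun m n h =>
    (H (chainList G n)).choose_spec.2 (f m) (chainFun_mem_chainList G h)
  obtain ⟨c, _, φ, hφ, hconv⟩ := hA f hmem
  rw [BConverges, Metric.tendsto_atTop] at hconv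
  obtain ⟨I, hI⟩ := hconv (ε / (2 * b)) (by positivity)
  have hIv : ∀ i, I ≤ i → d (f (φ i)) c < ε / (2 * b) := by
    intro i hi
    have := hI i hi
    rw [Real.dist_eq, sub_zero] at this
    simpa [Function.comp, abs_of_nonneg (hd.1 _ _)] using this
  have h1 := hIv I le_rfl
  have h2 := hIv (I + 1) (Nat.le_succ I)
  have h3 : ε ≤ d (f (φ (I + 1))) (f (φ I)) := hsep _ _ (hφ (Nat.lt_succ_self I))
  have h4 : d (f (φ (I + 1))) (f (φ I)) ≤ b * (d (f (φ (I + 1))) c + d c (f (φ I))) :=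
    hd.2.2.2 _ _ _
  have h5 : d c (f (φ I)) = d (f (φ I)) c := hd.2.2.1 _ _
  have h6 : b * (ε / (2 * b)) = ε / 2 := by field_simp
  nlinarith
end Aux2

section Aux3
variable {X : Type*} {b : ℝ} {d : X → X → ℝ}

lemma chain_lemma (hb : 1 ≤ b) (hd : IsBMetric b d) (hcomp : BComplete d)
    (A : ℕ → Set X) (hA : ∀ n, A n ∈ HX d) (N : ℕ → ℕ) (hNmono : Monotone N)
    (hN : ∀ k, ∀ m, N k ≤ m → ∀ n, N k ≤ n → hausD d (A m) (A n) < (2 * b)⁻¹ ^ (k + 1))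
    (k n : ℕ) (hn : N k ≤ n) {a : X} (ha : a ∈ A n) :
    ∃ x, Tendsto (fun m => distPtSet d x (A m)) atTop (𝓝 0) ∧
      d a x ≤ b * (2 * b)⁻¹ ^ k := by
  have hb0 : (0:ℝ) < b := lt_of_lt_of_le one_pos hb
  set r : ℝ := (2 * b)⁻¹ with hrdef
  have hr0 : 0 < r := by positivity
  have hr1 : r < 1 := by
    rw [hrdef, inv_lt_one_iff₀]; right; linarith
  have h2b : 2 * b * r = 1 := mul_inv_cancel₀ (by positivity)
  set idx : ℕ → ℕ := fun j => if j = 0 then n else N (k + j) with hidx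
  have hidxge : ∀ j, N (k + j) ≤ idx j := by
    intro j
    cases j with
    | zero => simpa [hidx] using hn
    | succ j => simp [hidx]
  -- build the chain
  obtain ⟨u, humem, hustep⟩ := exists_seq_machine
    (fun j => if j = 0 then ({a} : Set X) else A (N (k + j)))
    (fun j x y => d x y < r ^ (k + j + 1))
    (by simp)
    (by
      intro j x hx
      have hxmem : x ∈ A (idx j) := by
        cases j with
        | zero => simp only [if_pos rfl, mem_singleton_iff] at hx; subst hx; simpa [hidx]
        | succ j => simpa [hidx] using hx
      have hH : hausD d (A (idx j)) (A (N (k + j + 1))) < r ^ (k + j + 1) :=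
        hN (k + j) _ (hidxge j) _ (hNmono (Nat.le_succ _))
      have hdx : distPtSet d x (A (N (k + j + 1))) < r ^ (k + j + 1) :=
        lt_of_le_of_lt (distPtSet_le_hausD hb hd (hA (idx j)).2 (hA (idx j)).1
          (hA (N (k + j + 1))).1 hxmem) hH
      obtain ⟨y, hy, hdy⟩ := exists_lt_of_distPtSet_lt (hA (N (k + j + 1))).1 hdx
      exact ⟨y, by simpa [add_assoc] using hy, hdy⟩)
  have hu0 : u 0 = a := by simpa using humem 0
  have humem' : ∀ j, u j ∈ A (idx j) := by
    intro j
    cases j with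
    | zero => rw [hu0]; simpa [hidx]
    | succ j => simpa [hidx] using humem (j + 1)
  -- the key distance estimate along the chain
  have key : ∀ t j, d (u j) (u (j + t + 1)) ≤ r ^ (k + j) := by
    intro t
    induction t with
    | zero =>
      intro j
      exact le_trans (hustep j).le (pow_le_pow_of_le_one hr0.le hr1.le (by omega))
    | succ t ih =>
      intro j
      have h1 : d (u j) (u (j + t + 2)) ≤
          b * (d (u j) (u (j + 1)) + d (u (j + 1)) (u (j + t + 2))) := hd.2.2.2 _ _ _
      have h2 : d (u (j + 1)) (u ((j + 1) + t + 1)) ≤ r ^ (k + (j + 1)) := ih (j + 1)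
      have he : (j + 1) + t + 1 = j + t + 2 := by omega
      rw [he] at h2
      have h3 : d (u j) (u (j + 1)) ≤ r ^ (k + j + 1) := (hustep j).le
      have hre : r ^ (k + (j+1)) = r ^ (k + j) * r := by rw [← pow_succ]; ring_nf
      have hre2 : r ^ (k + j + 1) = r ^ (k + j) * r := by rw [← pow_succ]
      have : b * (d (u j) (u (j + 1)) + d (u (j + 1)) (u (j + t + 2))) ≤ r ^ (k + j) := by
        rw [hre] at h2; rw [hre2] at h3
        nlinarith [pow_pos hr0 (k + j), hd.1 (u j) (u (j+1)), hd.1 (u (j+1)) (u (j+t+2))]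
      calc d (u j) (u (j + t + 1 + 1)) = d (u j) (u (j + t + 2)) := by ring_nf
        _ ≤ _ := le_trans h1 this
  -- the chain is Cauchy
  have hcau : BCauchy d u := by
    intro ε hε
    obtain ⟨J, hJ⟩ := exists_pow_lt_of_lt_one hε hr1
    refine ⟨J, fun m hm n' hn' => ?_⟩
    have hbound : ∀ p q : ℕ, J ≤ p → p < q → d (u p) (u q) < ε := by
      intro p q hp hpq
      obtain ⟨t, rfl⟩ : ∃ t, q = p + t + 1 := ⟨q - p - 1, by omega⟩
      calc d (u p) (u (p + t + 1)) ≤ r ^ (k + p) := key t p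
        _ ≤ r ^ J := pow_le_pow_of_le_one hr0.le hr1.le (by omega)
        _ < ε := hJ
    rcases lt_trichotomy m n' with h | h | h
    · exact hbound m n' hm h
    · subst h; rw [(hd.2.1 _ _).2 rfl]; exact hε
    · rw [hd.2.2.1]; exact hbound n' m hn' h
  obtain ⟨x, hx⟩ := hcomp u hcau
  rw [BConverges] at hx
  refine ⟨x, ?_, ?_⟩
  · -- x is in the limit set
    apply tendsto_zero_of_forall (fun m => distPtSet_nonneg hd _ _)
    intro ε hε
    have hrt : Tendsto (fun j : ℕ => r ^ (k + j)) atTop (𝓝 0) := by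
      have := (tendsto_pow_atTop_nhds_zero_of_lt_one hr0.le hr1).const_mul (r ^ k)
      simpa [pow_add, mul_zero] using this
    have htend : Tendsto (fun j => b * (d (u j) x + r ^ (k + j))) atTop (𝓝 0) := by
      have := (hx.add hrt).const_mul b
      simpa using this
    obtain ⟨j, hj⟩ := (htend.eventually (gt_mem_nhds hε)).exists
    refine ⟨N (k + j), fun m hm => ?_⟩
    have h8 : distPtSet d x (A m) ≤ b * (d x (u j) + distPtSet d (u j) (A m)) :=
      distPtSet_le_b_mul hb hd (hA m).1 x (u j)
    have h6 : distPtSet d (u j) (A m) ≤ hausD d (A (idx j)) (A m) :=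
      distPtSet_le_hausD hb hd (hA (idx j)).2 (hA (idx j)).1 (hA m).1 (humem' j)
    have h7 : hausD d (A (idx j)) (A m) < r ^ (k + j + 1) := hN (k + j) _ (hidxge j) m hm
    have h9 : r ^ (k + j + 1) ≤ r ^ (k + j) := pow_le_pow_of_le_one hr0.le hr1.le (by omega)
    have hsym : d x (u j) = d (u j) x := hd.2.2.1 _ _
    calc distPtSet d x (A m) ≤ b * (d x (u j) + distPtSet d (u j) (A m)) := h8
      _ < b * (d (u j) x + r ^ (k + j)) := by
          rw [hsym]
          apply mul_lt_mul_of_pos_left _ hb0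
          linarith
      _ < ε := hj
  · -- d a x ≤ b * r ^ k
    refine le_of_forall_pos_le_add fun ε hε => ?_
    have hev : ∀ᶠ j : ℕ in atTop, d (u j) x < ε / b :=
      hx.eventually (gt_mem_nhds (by positivity))
    obtain ⟨j, hj1, hj2⟩ := (hev.and (eventually_ge_atTop 1)).exists
    obtain ⟨t, rfl⟩ : ∃ t, j = 0 + t + 1 := ⟨j - 1, by omega⟩
    have h1 : d (u 0) (u (0 + t + 1)) ≤ r ^ (k + 0) := key t 0
    have h2 : d a x ≤ b * (d a (u (0 + t + 1)) + d (u (0 + t + 1)) x) := hd.2.2.2 _ _ _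
    rw [← hu0] at h2 ⊢
    have h3 : b * (ε / b) = ε := mul_div_cancel₀ _ (ne_of_gt hb0)
    rw [Nat.add_zero] at h1
    have h4 : b * d (u 0) (u (0 + t + 1)) ≤ b * r ^ k := by
      simpa using mul_le_mul_of_nonneg_left h1 hb0.le
    have h5 := mul_lt_mul_of_pos_left hj1 hb0
    linarith
  end Aux3

section Aux4
variable {X : Type*} {b : ℝ} {d : X → X → ℝ}

lemma limitSet_compact (hb : 1 ≤ b) (hd : IsBMetric b d) (hcomp : BComplete d)
    (A : ℕ → Set X) (hA : ∀ n, A n ∈ HX d) (N : ℕ → ℕ)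
    (hN : ∀ k, ∀ m, N k ≤ m → ∀ n, N k ≤ n → hausD d (A m) (A n) < (2 * b)⁻¹ ^ (k + 1)) :
    BSeqCompact d {x | Tendsto (fun m => distPtSet d x (A m)) atTop (𝓝 0)} := by
  classical
  have hb0 : (0:ℝ) < b := lt_of_lt_of_le one_pos hb
  set r : ℝ := (2 * b)⁻¹ with hrdef
  have hr0 : 0 < r := by positivity
  have hr1 : r < 1 := by rw [hrdef, inv_lt_one_iff₀]; right; linarith
  have h2b : 2 * b * r = 1 := mul_inv_cancel₀ (by positivity)
  intro z hz
  simp only [mem_setOf_eq] at hz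
  -- step 1: each z i is close to A (N k)
  have approx1 : ∀ i k, distPtSet d (z i) (A (N k)) < r ^ k := by
    intro i k
    have hev : ∀ᶠ m : ℕ in atTop, distPtSet d (z i) (A m) < r ^ (k + 1) :=
      (hz i).eventually (gt_mem_nhds (pow_pos hr0 _))
    obtain ⟨m, hm1, hm2⟩ := (hev.and (eventually_ge_atTop (N k))).exists
    have h16 : distPtSet d (z i) (A (N k)) ≤
        b * (distPtSet d (z i) (A m) + hausD d (A m) (A (N k))) :=
      distPtSet_le_of_hausD hb hd (hA m).2 (hA m).1 (hA (N k)).1 (z i)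
    have hH : hausD d (A m) (A (N k)) < r ^ (k + 1) := hN k m hm2 (N k) le_rfl
    have hcalc : b * (distPtSet d (z i) (A m) + hausD d (A m) (A (N k))) <
        b * (r ^ (k + 1) + r ^ (k + 1)) := by
      apply mul_lt_mul_of_pos_left _ hb0
      linarith
    have heq : b * (r ^ (k + 1) + r ^ (k + 1)) = r ^ k := by
      rw [pow_succ]; nlinarith [pow_pos hr0 k]
    linarith
  have approx2 : ∀ i k, ∃ q ∈ A (N k), d (z i) q < r ^ k := fun i k =>
    exists_lt_of_distPtSet_lt (hA (N k)).1 (approx1 i k)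
  -- finite nets
  choose T hT using fun k => exists_finite_net hb hd (hA (N k)).2 (pow_pos hr0 k)
  have approx3 : ∀ i k, ∃ p ∈ T k, d (z i) p < 2 * b * r ^ k := by
    intro i k
    obtain ⟨q, hq, hdq⟩ := approx2 i k
    obtain ⟨p, hp, hdp⟩ := hT k q hq
    refine ⟨p, hp, ?_⟩
    calc d (z i) p ≤ b * (d (z i) q + d q p) := hd.2.2.2 _ _ _
      _ < b * (r ^ k + r ^ k) := mul_lt_mul_of_pos_left (by linarith) hb0
      _ = 2 * b * r ^ k := by ring
  -- nested infinite index sets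
  obtain ⟨SS, hSSmem, hSSsub⟩ := exists_seq_machine
    (fun k => {S : Set ℕ | S.Infinite ∧
      (k = 0 ∨ ∀ i ∈ S, ∀ j ∈ S, d (z i) (z j) ≤ 4 * b ^ 2 * r ^ k)})
    (fun _ S S' => S' ⊆ S)
    ⟨univ, infinite_univ, Or.inl rfl⟩
    (by
      intro k S hS
      choose p hp hdp using fun i : ℕ => approx3 i (k + 1)
      by_cases hfib : ∃ q ∈ T (k + 1), {i ∈ S | p i = q}.Infinite
      · obtain ⟨q, _, hq⟩ := hfib
        refine ⟨{i ∈ S | p i = q}, ⟨hq, Or.inr ?_⟩, fun i hi => hi.1⟩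
        rintro i ⟨hiS, hiq⟩ j ⟨hjS, hjq⟩
        have h1 : d (z i) q < 2 * b * r ^ (k + 1) := hiq ▸ hdp i
        have h2 : d (z j) q < 2 * b * r ^ (k + 1) := hjq ▸ hdp j
        have h3 : d (z i) (z j) ≤ b * (d (z i) q + d q (z j)) := hd.2.2.2 _ _ _
        have h4 : d q (z j) = d (z j) q := hd.2.2.1 _ _
        nlinarith [pow_pos hr0 (k + 1)]
      · exfalso
        push_neg at hfib
        have : S ⊆ ⋃ q ∈ (T (k + 1) : Set X), {i ∈ S | p i = q} := by
          intro i hi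
          exact mem_biUnion (hp i) ⟨hi, rfl⟩
        exact hS.1 (((T (k + 1)).finite_toSet.biUnion
          (fun q hq => hfib q hq)).subset this))
  have hSSanti : ∀ k l, k ≤ l → SS l ⊆ SS k := by
    intro k l hkl
    exact antitone_nat_of_succ_le hSSsub hkl
  -- pick strictly increasing indices
  obtain ⟨φ, hφmem, hφlt⟩ := exists_seq_machine (fun k => SS k) (fun _ i i' => i < i')
    (hSSmem 0).1.nonempty
    (by
      intro k i _
      obtain ⟨i', hi', hlt⟩ := (hSSmem (k + 1)).1.exists_gt i
      exact ⟨i', hi', hlt⟩)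
  have hφ : StrictMono φ := strictMono_nat_of_lt_succ hφlt
  -- the subsequence is Cauchy
  have hcau : BCauchy d (z ∘ φ) := by
    intro ε hε
    have hDt : Tendsto (fun k : ℕ => 4 * b ^ 2 * r ^ k) atTop (𝓝 0) := by
      have := (tendsto_pow_atTop_nhds_zero_of_lt_one hr0.le hr1).const_mul (4 * b ^ 2)
      simpa using this
    obtain ⟨K, hK1, hK2⟩ :=
      ((hDt.eventually (gt_mem_nhds hε)).and (eventually_ge_atTop 1)).exists
    refine ⟨K, fun m hm n hn => ?_⟩
    have hmK : φ m ∈ SS K := hSSanti K m hm (hφmem m)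
    have hnK : φ n ∈ SS K := hSSanti K n hn (hφmem n)
    have := (hSSmem K).2.resolve_left (by omega)
    exact lt_of_le_of_lt (this (φ m) hmK (φ n) hnK) hK1
  obtain ⟨a, haconv⟩ := hcomp _ hcau
  rw [BConverges] at haconv
  refine ⟨a, ?_, φ, hφ, haconv⟩
  -- a is in the limit set
  simp only [mem_setOf_eq]
  apply tendsto_zero_of_forall (fun m => distPtSet_nonneg hd _ _)
  intro ε hε
  have hev : ∀ᶠ k : ℕ in atTop, d ((z ∘ φ) k) a < ε / (2 * b) :=
    haconv.eventually (gt_mem_nhds (by positivity))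
  obtain ⟨k, hk⟩ := hev.exists
  have hev2 : ∀ᶠ m : ℕ in atTop, distPtSet d (z (φ k)) (A m) < ε / (2 * b) :=
    (hz (φ k)).eventually (gt_mem_nhds (by positivity))
  obtain ⟨M, hM⟩ := eventually_atTop.1 hev2
  refine ⟨M, fun m hm => ?_⟩
  have h8 : distPtSet d a (A m) ≤ b * (d a (z (φ k)) + distPtSet d (z (φ k)) (A m)) :=
    distPtSet_le_b_mul hb hd (hA m).1 a (z (φ k))
  have hsym : d a (z (φ k)) = d ((z ∘ φ) k) a := hd.2.2.1 _ _
  have hlt : b * (d a (z (φ k)) + distPtSet d (z (φ k)) (A m)) <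
      b * (ε / (2 * b) + ε / (2 * b)) := by
    apply mul_lt_mul_of_pos_left _ hb0
    rw [hsym]
    exact add_lt_add hk (hM m hm)
  have heq : b * (ε / (2 * b) + ε / (2 * b)) = ε := by field_simp; ring
  linarith
end Aux4

/-- If `(X,d)` is a complete b-metric space, then `(H(X), H)` is complete: every
H-Cauchy sequence of nonempty compact sets H-converges to a nonempty compact set. -/
theorem hausD_complete {X : Type*} (b : ℝ) (hb : 1 ≤ b)
    (d : X → X → ℝ) (hd : IsBMetric b d) (hcomp : BComplete d)
    (A : ℕ → Set X) (hA : ∀ n, A n ∈ HX d)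
    (hcauchy : ∀ ε : ℝ, 0 < ε → ∃ N : ℕ, ∀ m ≥ N, ∀ n ≥ N, hausD d (A m) (A n) < ε) :
    ∃ L ∈ HX d, Tendsto (fun n => hausD d (A n) L) atTop (𝓝 0) := by
  have hb0 : (0:ℝ) < b := lt_of_lt_of_le one_pos hb
  set r : ℝ := (2 * b)⁻¹ with hrdef
  have hr0 : 0 < r := by positivity
  have hr1 : r < 1 := by rw [hrdef, inv_lt_one_iff₀]; right; linarith
  -- construct the sequence of thresholds N
  obtain ⟨N, hNmem, hNlt⟩ := exists_seq_machine
    (fun k => {M : ℕ | ∀ m, M ≤ m → ∀ n, M ≤ n → hausD d (A m) (A n) < r ^ (k + 1)})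
    (fun _ M M' => M < M')
    (by
      obtain ⟨M, hM⟩ := hcauchy (r ^ 1) (pow_pos hr0 1)
      exact ⟨M, fun m hm n hn => hM m hm n hn⟩)
    (by
      intro k M _
      obtain ⟨M', hM'⟩ := hcauchy (r ^ (k + 2)) (pow_pos hr0 _)
      refine ⟨max (M + 1) M', fun m hm n hn => ?_, ?_⟩
      · exact hM' m (le_trans (le_max_right _ _) hm) n (le_trans (le_max_right _ _) hn)
      · exact lt_of_lt_of_le (Nat.lt_succ_self M) (le_max_left _ _))
  have hNmono : Monotone N := (strictMono_nat_of_lt_succ hNlt).monotone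
  have hN : ∀ k, ∀ m, N k ≤ m → ∀ n, N k ≤ n → hausD d (A m) (A n) < r ^ (k + 1) :=
    fun k => hNmem k
  set L : Set X := {x | Tendsto (fun m => distPtSet d x (A m)) atTop (𝓝 0)} with hLdef
  -- L is nonempty
  obtain ⟨a0, ha0⟩ := (hA (N 0)).1
  obtain ⟨x0, hx0L, _⟩ := chain_lemma hb hd hcomp A hA N hNmono hN 0 (N 0) le_rfl ha0
  have hLne : L.Nonempty := ⟨x0, hx0L⟩
  have hLcomp : BSeqCompact d L := limitSet_compact hb hd hcomp A hA N hN
  refine ⟨L, ⟨hLne, hLcomp⟩, ?_⟩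
  apply tendsto_zero_of_forall (fun n => hausD_nonneg hd _ _)
  intro ε hε
  -- choose k with b * r ^ k < ε
  have hDt : Tendsto (fun k : ℕ => b * r ^ k) atTop (𝓝 0) := by
    have := (tendsto_pow_atTop_nhds_zero_of_lt_one hr0.le hr1).const_mul b
    simpa using this
  obtain ⟨k, hk⟩ := (hDt.eventually (gt_mem_nhds hε)).exists
  refine ⟨N k, fun n hn => lt_of_le_of_lt ?_ hk⟩
  apply hausD_le (hA n).1 hLne
  · -- points of A n are close to L
    intro a ha
    obtain ⟨x, hxL, hdx⟩ := chain_lemma hb hd hcomp A hA N hNmono hN k n hn ha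
    exact le_trans (distPtSet_le hd a hxL) hdx
  · -- points of L are close to A n
    intro x hxL
    rw [hLdef, mem_setOf_eq] at hxL
    refine le_of_forall_pos_le_add fun ε' hε' => ?_
    have hev : ∀ᶠ m : ℕ in atTop, distPtSet d x (A m) < ε' / b :=
      hxL.eventually (gt_mem_nhds (by positivity))
    obtain ⟨m, hm1, hm2⟩ := (hev.and (eventually_ge_atTop (N k))).exists
    have h16 : distPtSet d x (A n) ≤
        b * (distPtSet d x (A m) + hausD d (A m) (A n)) :=
      distPtSet_le_of_hausD hb hd (hA m).2 (hA m).1 (hA n).1 x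
    have hH : hausD d (A m) (A n) < r ^ (k + 1) := hN k m hm2 n hn
    have hr2 : r ^ (k + 1) ≤ r ^ k := pow_le_pow_of_le_one hr0.le hr1.le (by omega)
    have hcalc : b * (distPtSet d x (A m) + hausD d (A m) (A n)) ≤
        b * (ε' / b + r ^ k) := by
      apply mul_le_mul_of_nonneg_left _ hb0.le
      linarith
    have heq : b * (ε' / b + r ^ k) = b * r ^ k + ε' := by field_simp; ring
    linarith
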